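/- arXiv:2303.09396 — 4 statements merged into one kernel-verified Lean document; each statement's English description precedes it below -/
import Mathlib

section
/- Let {λ_n} be nonzero complex numbers with Re(λ_n) ≥ β₀|λ_n| for all n (0 < β₀ < 1) and ∑ 1/|λ_n| < ∞, and let Θ(t) = ∑_{n≥1} e^{-λ_n t}. Then for every x ≥ 0 and k ∈ ℕ, ∑_{n≥1} k!/(x+λ_n)^{k+1} = ∫_0^∞ e^{-xt} t^k Θ(t) dt, both sides converging absolutely. -/
open MeasureTheory Set Filter Topology
open scoped Nat ENNReal

/-!
For `0 < Re s`, integration by parts gives `∫₀^∞ tᵏ e^{-st} dt = k! / s^(k+1)`, while the integral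
of the absolute value is `k! / (Re s)^(k+1)`. For `s = x + λₙ` we have `Re s ≥ β₀ ‖λₙ‖`, so these
absolute integrals are dominated by `k! / (β₀ ‖λₙ‖)^(k+1)`, which is summable because `∑ 1/‖λₙ‖`
is. Since `e^{-xt} tᵏ Θ(t) = ∑ₙ tᵏ e^{-(x+λₙ)t}`, summation and integration may be interchanged.
-/

section LaplaceMonomial

lemma integral_pow_mul_exp_neg_mul_Ioi {c : ℝ} (hc : 0 < c) (k : ℕ) :
    ∫ t in Ioi (0 : ℝ), t ^ k * Real.exp (-c * t) = k ! / c ^ (k + 1) := by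
  have h := Real.integral_rpow_mul_exp_neg_mul_Ioi (a := k + 1) (by positivity) hc
  rw [add_sub_cancel_right, Real.Gamma_nat_eq_factorial, ← Nat.cast_succ, Real.rpow_natCast,
    one_div_pow, one_div_mul_eq_div] at h
  rw [← h]
  refine setIntegral_congr_fun measurableSet_Ioi fun t _ ↦ ?_
  simp [Real.rpow_natCast]

lemma integrableOn_pow_mul_exp_neg_mul_Ioi {c : ℝ} (hc : 0 < c) (k : ℕ) :
    IntegrableOn (fun t : ℝ ↦ t ^ k * Real.exp (-c * t)) (Ioi 0) :=
  .of_integral_ne_zero (by rw [integral_pow_mul_exp_neg_mul_Ioi hc]; positivity)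

variable {s : ℂ}

lemma norm_ofReal_pow_mul_cexp_neg_mul (s : ℂ) (k : ℕ) {t : ℝ} (ht : 0 ≤ t) :
    ‖(t : ℂ) ^ k * Complex.exp (-s * t)‖ = t ^ k * Real.exp (-s.re * t) := by
  simp [Complex.norm_exp, abs_of_nonneg ht]

lemma integrableOn_ofReal_pow_mul_cexp_neg_mul (hs : 0 < s.re) (k : ℕ) :
    IntegrableOn (fun t : ℝ ↦ (t : ℂ) ^ k * Complex.exp (-s * t)) (Ioi 0) := by
  refine (integrableOn_pow_mul_exp_neg_mul_Ioi hs k).mono' (by fun_prop) ?_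
  filter_upwards [ae_restrict_mem measurableSet_Ioi] with t ht
  exact (norm_ofReal_pow_mul_cexp_neg_mul s k ht.le).le

lemma integral_norm_ofReal_pow_mul_cexp_neg_mul (hs : 0 < s.re) (k : ℕ) :
    ∫ t in Ioi (0 : ℝ), ‖(t : ℂ) ^ k * Complex.exp (-s * t)‖ = k ! / s.re ^ (k + 1) := by
  rw [← integral_pow_mul_exp_neg_mul_Ioi hs k]
  exact setIntegral_congr_fun measurableSet_Ioi fun t ht ↦
    norm_ofReal_pow_mul_cexp_neg_mul s k ht.le

lemma tendsto_ofReal_pow_mul_cexp_neg_mul_atTop (hs : 0 < s.re) (k : ℕ) :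
    Tendsto (fun t : ℝ ↦ (t : ℂ) ^ k * Complex.exp (-s * t)) atTop (𝓝 0) := by
  rw [tendsto_zero_iff_norm_tendsto_zero]
  refine (tendsto_rpow_mul_exp_neg_mul_atTop_nhds_zero k s.re hs).congr' ?_
  filter_upwards [eventually_ge_atTop 0] with t ht
  rw [norm_ofReal_pow_mul_cexp_neg_mul s k ht, Real.rpow_natCast]

lemma hasDerivAt_ofReal_pow_succ_mul_cexp_neg_mul (s : ℂ) (k : ℕ) (t : ℝ) :
    HasDerivAt (fun u : ℝ ↦ (u : ℂ) ^ (k + 1) * Complex.exp (-s * u))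
      ((k + 1) * ((t : ℂ) ^ k * Complex.exp (-s * t))
        - s * ((t : ℂ) ^ (k + 1) * Complex.exp (-s * t))) t := by
  have hpow : HasDerivAt (fun u : ℝ ↦ (u : ℂ) ^ (k + 1)) ((k + 1) * (t : ℂ) ^ k) t := by
    simpa using (hasDerivAt_pow (k + 1) (t : ℂ)).comp_ofReal
  have hexp : HasDerivAt (fun u : ℝ ↦ Complex.exp (-s * u)) (Complex.exp (-s * t) * -s) t :=
    (((hasDerivAt_id (t : ℂ)).const_mul (-s)).cexp.comp_ofReal).congr_deriv (by simp)
  exact (hpow.mul hexp).congr_deriv (by ring)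

lemma mul_integral_ofReal_pow_succ_mul_cexp_neg_mul (hs : 0 < s.re) (k : ℕ) :
    s * ∫ t in Ioi (0 : ℝ), (t : ℂ) ^ (k + 1) * Complex.exp (-s * t)
      = (k + 1) * ∫ t in Ioi (0 : ℝ), (t : ℂ) ^ k * Complex.exp (-s * t) := by
  have hk := (integrableOn_ofReal_pow_mul_cexp_neg_mul hs k).const_mul ((k : ℂ) + 1)
  have hk1 := (integrableOn_ofReal_pow_mul_cexp_neg_mul hs (k + 1)).const_mul s
  have h := integral_Ioi_of_hasDerivAt_of_tendsto'
    (fun t _ ↦ hasDerivAt_ofReal_pow_succ_mul_cexp_neg_mul s k t) (hk.sub hk1)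
    (tendsto_ofReal_pow_mul_cexp_neg_mul_atTop hs (k + 1))
  rw [integral_sub hk hk1, integral_const_mul, integral_const_mul] at h
  push_cast at h
  linear_combination -h

lemma integral_ofReal_pow_mul_cexp_neg_mul (hs : 0 < s.re) (k : ℕ) :
    ∫ t in Ioi (0 : ℝ), (t : ℂ) ^ k * Complex.exp (-s * t) = k ! / s ^ (k + 1) := by
  have hs0 : s ≠ 0 := fun h ↦ by simp [h] at hs
  induction k with
  | zero =>
    simpa using integral_exp_mul_complex_Ioi (a := -s) (by simpa using hs) 0
  | succ k ih =>
    have h := mul_integral_ofReal_pow_succ_mul_cexp_neg_mul hs k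
    rw [ih] at h
    rw [eq_div_iff (pow_ne_zero _ hs0), Nat.factorial_succ, Nat.cast_mul, pow_succ',
      ← mul_assoc, mul_comm _ s, h]
    field_simp
    push_cast
    ring

end LaplaceMonomial

lemma Summable.pow_of_nonneg {ι : Type*} {f : ι → ℝ} (hf : Summable f) (h0 : ∀ i, 0 ≤ f i)
    {m : ℕ} (hm : m ≠ 0) : Summable fun i ↦ f i ^ m := by
  refine hf.of_norm_bounded_eventually ?_
  filter_upwards [hf.tendsto_cofinite_zero.eventually_le_const one_pos] with i hi
  rw [Real.norm_of_nonneg (pow_nonneg (h0 i) m)]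
  exact pow_le_of_le_one (h0 i) hi hm

lemma Summable.one_div_pow_of_le {ι : Type*} {a r : ι → ℝ} (ha : ∀ i, 0 < a i)
    (har : ∀ i, a i ≤ r i) (hsum : Summable fun i ↦ 1 / a i) {m : ℕ} (hm : m ≠ 0) :
    Summable fun i ↦ 1 / r i ^ m := by
  refine (hsum.pow_of_nonneg (fun i ↦ (one_div_pos.2 (ha i)).le) hm).of_nonneg_of_le
    (fun i ↦ by have := (ha i).trans_le (har i); positivity) fun i ↦ ?_
  rw [one_div_pow]
  exact one_div_le_one_div_of_le (pow_pos (ha i) m) (pow_le_pow_left₀ (ha i).le (har i) m)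

lemma MeasureTheory.integrable_tsum_of_summable_integral_norm {α E ι : Type*}
    [MeasurableSpace α] {μ : Measure α} [NormedAddCommGroup E] [CompleteSpace E] [Countable ι]
    {F : ι → α → E} (hF_int : ∀ i, Integrable (F i) μ)
    (hF_sum : Summable fun i ↦ ∫ a, ‖F i a‖ ∂μ) :
    Integrable (fun a ↦ ∑' i, F i a) μ := by
  let f : ι → α →₁[μ] E := fun i ↦ (hF_int i).toL1 (F i)
  have hf : ∑' i, ‖f i‖ₑ ≠ ∞ := by
    refine tsum_enorm_ne_top_iff_summable_norm.2 (hF_sum.congr fun i ↦ ?_)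
    exact (L1.norm_of_fun_eq_integral_norm (hF_int i)).symm
  refine (L1.integrable_coeFn (∑' i, f i)).congr ?_
  filter_upwards [Lp.coeFn_tsum hf, ae_all_iff.2 fun i ↦ (hF_int i).coeFn_toL1] with a h h'
  rw [h]
  exact tsum_congr h'

section SeriesOfExponentials

variable {s : ℕ → ℂ} (hs : ∀ n, 0 < (s n).re) {k : ℕ}
  (hsum : Summable fun n ↦ 1 / (s n).re ^ (k + 1))
include hs hsum

lemma summable_integral_norm_ofReal_pow_mul_cexp_neg_mul :
    Summable fun n ↦ ∫ t in Ioi (0 : ℝ), ‖(t : ℂ) ^ k * Complex.exp (-s n * t)‖ :=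
  (hsum.mul_left (k ! : ℝ)).congr fun n ↦ by
    rw [integral_norm_ofReal_pow_mul_cexp_neg_mul (hs n), mul_one_div]

lemma summable_norm_factorial_div_pow :
    Summable fun n ↦ ‖(k ! : ℂ) / s n ^ (k + 1)‖ := by
  refine (summable_integral_norm_ofReal_pow_mul_cexp_neg_mul hs hsum).of_nonneg_of_le
    (fun _ ↦ norm_nonneg _) fun n ↦ ?_
  rw [← integral_ofReal_pow_mul_cexp_neg_mul (hs n)]
  exact norm_integral_le_integral_norm _

lemma integrableOn_tsum_ofReal_pow_mul_cexp_neg_mul :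
    IntegrableOn (fun t : ℝ ↦ ∑' n, (t : ℂ) ^ k * Complex.exp (-s n * t)) (Ioi 0) :=
  integrable_tsum_of_summable_integral_norm
    (fun n ↦ integrableOn_ofReal_pow_mul_cexp_neg_mul (hs n) k)
    (summable_integral_norm_ofReal_pow_mul_cexp_neg_mul hs hsum)

lemma tsum_factorial_div_pow_eq_integral_tsum :
    ∑' n, (k ! : ℂ) / s n ^ (k + 1)
      = ∫ t in Ioi (0 : ℝ), ∑' n, (t : ℂ) ^ k * Complex.exp (-s n * t) := by
  simp_rw [← integral_ofReal_pow_mul_cexp_neg_mul (hs _)]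
  exact integral_tsum_of_summable_integral_norm
    (fun n ↦ integrableOn_ofReal_pow_mul_cexp_neg_mul (hs n) k)
    (summable_integral_norm_ofReal_pow_mul_cexp_neg_mul hs hsum)

end SeriesOfExponentials

theorem stmt3_general (lam : ℕ → ℂ) (hne : ∀ n, lam n ≠ 0)
    (β₀ : ℝ) (hβ₀ : 0 < β₀)
    (hre : ∀ n, β₀ * ‖lam n‖ ≤ (lam n).re)
    (hsum : Summable fun n => 1 / ‖lam n‖)
    (Θ : ℝ → ℂ) (hΘ : ∀ t : ℝ, 0 < t → Θ t = ∑' n, Complex.exp (-lam n * t)) :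
    ∀ x : ℝ, 0 ≤ x → ∀ k : ℕ,
      (Summable fun n => ‖(Nat.factorial k : ℂ) / (x + lam n) ^ (k + 1)‖) ∧
      Integrable (fun t : ℝ =>
        Complex.exp (-x * t) * (t : ℂ) ^ k * Θ t) (volume.restrict (Set.Ioi 0)) ∧
      (∑' n, (Nat.factorial k : ℂ) / (x + lam n) ^ (k + 1)) =
        ∫ t in Set.Ioi (0:ℝ), Complex.exp (-x * t) * (t : ℂ) ^ k * Θ t := by
  intro x hx k
  have hlam_pos n : 0 < β₀ * ‖lam n‖ := mul_pos hβ₀ (norm_pos_iff.2 (hne n))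
  have hre_le n : β₀ * ‖lam n‖ ≤ ((x : ℂ) + lam n).re := by
    simpa using (hre n).trans (le_add_of_nonneg_left hx)
  have hre_pos n : 0 < ((x : ℂ) + lam n).re := (hlam_pos n).trans_le (hre_le n)
  have hsum_re : Summable fun n ↦ 1 / ((x : ℂ) + lam n).re ^ (k + 1) :=
    ((hsum.mul_left β₀⁻¹).congr fun n ↦ by ring).one_div_pow_of_le hlam_pos hre_le
      k.succ_ne_zero
  have hΘ_eq : (fun t : ℝ ↦ Complex.exp (-x * t) * (t : ℂ) ^ k * Θ t)
      =ᵐ[volume.restrict (Ioi 0)]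
        fun t ↦ ∑' n, (t : ℂ) ^ k * Complex.exp (-((x : ℂ) + lam n) * t) := by
    filter_upwards [ae_restrict_mem measurableSet_Ioi] with t ht
    rw [hΘ t ht, ← tsum_mul_left]
    refine tsum_congr fun n ↦ ?_
    rw [neg_add, add_mul, Complex.exp_add]
    ring
  exact ⟨summable_norm_factorial_div_pow hre_pos hsum_re,
    (integrableOn_tsum_ofReal_pow_mul_cexp_neg_mul hre_pos hsum_re).congr hΘ_eq.symm,
    (tsum_factorial_div_pow_eq_integral_tsum hre_pos hsum_re).trans
      (integral_congr_ae hΘ_eq.symm)⟩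

theorem stmt3 (lam : ℕ → ℂ) (hne : ∀ n, lam n ≠ 0)
    (β₀ : ℝ) (hβ₀ : 0 < β₀) (hβ₁ : β₀ < 1)
    (hre : ∀ n, β₀ * ‖lam n‖ ≤ (lam n).re)
    (hsum : Summable fun n => 1 / ‖lam n‖)
    (Θ : ℝ → ℂ) (hΘ : ∀ t : ℝ, 0 < t → Θ t = ∑' n, Complex.exp (-lam n * t)) :
    ∀ x : ℝ, 0 ≤ x → ∀ k : ℕ,
      (Summable fun n => ‖(Nat.factorial k : ℂ) / (x + lam n) ^ (k + 1)‖) ∧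
      Integrable (fun t : ℝ =>
        Complex.exp (-x * t) * (t : ℂ) ^ k * Θ t) (volume.restrict (Set.Ioi 0)) ∧
      (∑' n, (Nat.factorial k : ℂ) / (x + lam n) ^ (k + 1)) =
        ∫ t in Set.Ioi (0:ℝ), Complex.exp (-x * t) * (t : ℂ) ^ k * Θ t :=
  stmt3_general lam hne β₀ hβ₀ hre hsum Θ hΘ
end

section
/- Let {λ_n} be nonzero complex numbers with Re(λ_n) ≥ β₀|λ_n| for all n (0 < β₀ < 1), ∑ 1/|λ_n|^{α₀} < ∞ for some α₀ ∈ (0,1), and let Θ(t) = ∑_{n≥1} e^{-λ_n t}. If 0 < β < β₀·inf_n |λ_n|, then for each k ∈ ℕ the k-th derivative Θ^{(k)}(t) satisfies Θ^{(k)}(t) = O(e^{-βt}) as t → +∞. -/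
/-!
With `m = inf ‖λₙ‖` and `c = β₀ - β / m > 0`, for `t ≥ 1` the sector condition gives
`‖λₙ^k e^{-λₙ t}‖ ≤ ‖λₙ‖^k e^{-β₀ ‖λₙ‖ t} ≤ ‖λₙ‖^k e^{-c ‖λₙ‖} e^{-β t}`,
because `β t ≤ β (‖λₙ‖ / m) t` and `c ‖λₙ‖ ≤ c ‖λₙ‖ t`. The factor `x^k e^{-c x}` decays faster
than `x⁻¹`, hence, on `x ≥ m`, than a constant times `x^{-α₀}`; so the series is dominated by
`e^{-β t} · ∑ ‖λₙ‖^{-α₀}`.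
-/

open Filter Asymptotics Real

open scoped Nat

theorem Asymptotics.isBigO_tsum_of_norm_le {α ι E F : Type*} [NormedAddCommGroup E]
    [Norm F] {l : Filter α} {f : α → ι → E} {g : α → F} {u : ι → ℝ} (hu : Summable u)
    (h : ∀ᶠ t in l, ∀ n, ‖f t n‖ ≤ u n * ‖g t‖) :
    (fun t => ∑' n, f t n) =O[l] g :=
  isBigO_iff.2 ⟨∑' n, u n, h.mono fun t ht =>
    tsum_of_norm_bounded (by simpa only [tsum_mul_right] using (hu.mul_right ‖g t‖).hasSum) ht⟩

theorem Real.pow_mul_exp_neg_mul_le (k : ℕ) {c x : ℝ} (hc : 0 < c) (hx : 0 < x) :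
    x ^ k * exp (-(c * x)) ≤ (k + 1)! / c ^ (k + 1) * x⁻¹ := by
  have hexp : (c * x) ^ (k + 1) / (k + 1)! ≤ exp (c * x) :=
    pow_div_factorial_le_exp (c * x) (by positivity) (k + 1)
  calc x ^ k * exp (-(c * x)) = x ^ k / exp (c * x) := by rw [exp_neg, div_eq_mul_inv]
    _ ≤ x ^ k / ((c * x) ^ (k + 1) / (k + 1)!) := by gcongr
    _ = (k + 1)! / c ^ (k + 1) * x⁻¹ := by field_simp; ring

theorem Real.inv_le_rpow_mul_rpow_neg {α m x : ℝ} (hα : α ≤ 1) (hm : 0 < m) (hx : m ≤ x) :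
    x⁻¹ ≤ m ^ (α - 1) * x ^ (-α) := by
  have hx0 : 0 < x := hm.trans_le hx
  calc x⁻¹ = x ^ (α - 1) * x ^ (-α) := by
        rw [← rpow_add hx0, show α - 1 + -α = -1 by ring, rpow_neg_one]
    _ ≤ m ^ (α - 1) * x ^ (-α) :=
        mul_le_mul_of_nonneg_right (rpow_le_rpow_of_nonpos hm hx (by linarith)) (by positivity)

theorem Real.pow_mul_exp_neg_mul_le_rpow_neg (k : ℕ) {c m α x : ℝ} (hc : 0 < c) (hα : α ≤ 1)
    (hm : 0 < m) (hx : m ≤ x) :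
    x ^ k * exp (-(c * x)) ≤ (k + 1)! / c ^ (k + 1) * m ^ (α - 1) * x ^ (-α) := by
  calc x ^ k * exp (-(c * x)) ≤ (k + 1)! / c ^ (k + 1) * x⁻¹ :=
        pow_mul_exp_neg_mul_le k hc (hm.trans_le hx)
    _ ≤ (k + 1)! / c ^ (k + 1) * (m ^ (α - 1) * x ^ (-α)) := by
        gcongr
        exact inv_le_rpow_mul_rpow_neg hα hm hx
    _ = _ := by ring

theorem Real.exp_neg_mul_mul_le {β₀ β m a t : ℝ} (hβ : 0 ≤ β) (hβm : β ≤ β₀ * m) (hm : 0 < m)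
    (ha : m ≤ a) (ht : 1 ≤ t) :
    exp (-(β₀ * a * t)) ≤ exp (-((β₀ - β / m) * a)) * exp (-β * t) := by
  rw [← exp_add, exp_le_exp]
  have hc : 0 ≤ β₀ - β / m := sub_nonneg.2 ((div_le_iff₀ hm).2 hβm)
  have hca : (β₀ - β / m) * a ≤ (β₀ - β / m) * a * t :=
    le_mul_of_one_le_right (mul_nonneg hc (hm.le.trans ha)) ht
  have hβa : β ≤ β / m * a := by
    rw [div_mul_eq_mul_div, le_div_iff₀ hm]
    exact mul_le_mul_of_nonneg_left ha hβ
  nlinarith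

theorem Complex.norm_neg_pow_mul_exp_neg_mul_le {z : ℂ} {β₀ t : ℝ} (k : ℕ)
    (hre : β₀ * ‖z‖ ≤ z.re) (ht : 0 ≤ t) :
    ‖(-z) ^ k * exp (-z * t)‖ ≤ ‖z‖ ^ k * Real.exp (-(β₀ * ‖z‖ * t)) := by
  rw [norm_mul, norm_pow, norm_neg, norm_exp]
  gcongr
  simp only [neg_mul, neg_re, mul_re, ofReal_re, ofReal_im, mul_zero, sub_zero]
  nlinarith

theorem stmt5_general (lam : ℕ → ℂ)
    (β₀ α₀ : ℝ) (hα₁ : α₀ < 1)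
    (hre : ∀ n, β₀ * ‖lam n‖ ≤ (lam n).re)
    (hsum : Summable fun n => ‖lam n‖ ^ (-α₀))
    (β : ℝ) (hβ : 0 < β) (hβlt : β < β₀ * ⨅ n, ‖lam n‖) :
    ∀ k : ℕ,
      (fun t : ℝ => ∑' n, (-lam n) ^ k * Complex.exp (-lam n * t)) =O[atTop]
        fun t : ℝ => Real.exp (-β * t) := by
  intro k
  set m := ⨅ n, ‖lam n‖
  have hm_le : ∀ n, m ≤ ‖lam n‖ := ciInf_le ⟨0, by rintro _ ⟨n, rfl⟩; positivity⟩
  have hm : 0 < m := lt_of_le_of_ne (Real.iInf_nonneg fun n => norm_nonneg _) fun h => by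
    rw [← h, mul_zero] at hβlt; linarith
  have hc : 0 < β₀ - β / m := sub_pos.2 ((div_lt_iff₀ hm).2 hβlt)
  refine isBigO_tsum_of_norm_le (hsum.mul_left ((k + 1)! / (β₀ - β / m) ^ (k + 1) * m ^ (α₀ - 1)))
    (eventually_atTop.2 ⟨1, fun t ht n => ?_⟩)
  rw [norm_of_nonneg (exp_pos _).le]
  calc ‖(-lam n) ^ k * Complex.exp (-lam n * t)‖
      ≤ ‖lam n‖ ^ k * exp (-(β₀ * ‖lam n‖ * t)) :=
        Complex.norm_neg_pow_mul_exp_neg_mul_le k (hre n) (by linarith)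
    _ ≤ ‖lam n‖ ^ k * (exp (-((β₀ - β / m) * ‖lam n‖)) * exp (-β * t)) := by
        gcongr
        exact exp_neg_mul_mul_le hβ.le hβlt.le hm (hm_le n) ht
    _ = ‖lam n‖ ^ k * exp (-((β₀ - β / m) * ‖lam n‖)) * exp (-β * t) := by ring
    _ ≤ _ := mul_le_mul_of_nonneg_right
        (pow_mul_exp_neg_mul_le_rpow_neg k hc hα₁.le hm (hm_le n)) (exp_pos _).le

theorem stmt5 (lam : ℕ → ℂ) (hne : ∀ n, lam n ≠ 0)
    (β₀ α₀ : ℝ) (hβ₀ : 0 < β₀) (hβ₁ : β₀ < 1) (hα₀ : 0 < α₀) (hα₁ : α₀ < 1)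
    (hre : ∀ n, β₀ * ‖lam n‖ ≤ (lam n).re)
    (hsum : Summable fun n => ‖lam n‖ ^ (-α₀))
    (β : ℝ) (hβ : 0 < β) (hβlt : β < β₀ * ⨅ n, ‖lam n‖) :
    ∀ k : ℕ,
      (fun t : ℝ => ∑' n, (-lam n) ^ k * Complex.exp (-lam n * t)) =O[atTop]
        fun t : ℝ => Real.exp (-β * t) :=
  stmt5_general lam β₀ α₀ hα₁ hre hsum β hβ hβlt
end

section
/- Let {λ_n} be nonzero complex numbers with Re(λ_n) ≥ β₀|λ_n| (0 < β₀ < 1) and ∑ 1/|λ_n|^{α₀} < ∞ for some α₀ ∈ (0,1). Then for each k ∈ ℕ and each α with α₀ ≤ α < 1, the k-th derivative of Θ(t) = ∑ e^{-λ_n t} satisfies Θ^{(k)}(t) = O(t^{-α-k}) as t → 0⁺. -/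
/-! Since `Re λₙ ≥ β₀ |λₙ|`, each term of `Θ⁽ᵏ⁾(t)` is bounded by `|λₙ|ᵏ e^{-β₀ t |λₙ|}`. Writing
`|λₙ|ᵏ = |λₙ|^{-α₀} · |λₙ|^{α₀+k}` and using that `x ↦ x^s e^{-x}` is bounded on `[0, ∞)`, the term
is at most `C · |λₙ|^{-α₀} · t^{-α₀-k}`, and summing over `n` gives `Θ⁽ᵏ⁾(t) = O(t^{-α₀-k})`,
which is stronger than `O(t^{-α-k})` for `α ≥ α₀` as `t → 0⁺`. -/

open Filter Asymptotics

namespace Real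

/-- The maximum of `x ^ s * exp (-x)` on `[0, ∞)` is attained at `x = s`. -/
lemma rpow_mul_exp_neg_le {s x : ℝ} (hs : 0 ≤ s) (hx : 0 ≤ x) :
    x ^ s * exp (-x) ≤ (s / exp 1) ^ s := by
  rcases hs.eq_or_lt with rfl | hs
  · simpa using exp_le_one_iff.mpr (neg_nonpos.mpr hx)
  set y := x / s
  have hy : 0 ≤ y := div_nonneg hx hs.le
  have hxy : x = s * y := (mul_div_cancel₀ x hs.ne').symm
  calc x ^ s * exp (-x) = s ^ s * (y * exp (-y)) ^ s := by
        rw [hxy, mul_rpow hs.le hy, mul_rpow hy (exp_nonneg _), ← exp_mul]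
        ring_nf
    _ ≤ s ^ s * exp (-1) ^ s := by
        gcongr
        exact mul_exp_neg_le_exp_neg_one y
    _ = (s / exp 1) ^ s := by
        rw [exp_neg, div_eq_mul_inv, mul_rpow hs.le (inv_nonneg.mpr (exp_nonneg 1))]

end Real

lemma isBigO_rpow_rpow_nhdsGT_zero {p q : ℝ} (hqp : q ≤ p) :
    (fun t : ℝ => t ^ p) =O[nhdsWithin 0 (Set.Ioi 0)] fun t => t ^ q := by
  refine IsBigO.of_bound 1 ?_
  filter_upwards [Ioo_mem_nhdsGT (zero_lt_one' ℝ)] with t ⟨ht0, ht1⟩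
  rw [Real.norm_of_nonneg (Real.rpow_nonneg ht0.le _),
    Real.norm_of_nonneg (Real.rpow_nonneg ht0.le _), one_mul]
  exact Real.rpow_le_rpow_of_exponent_ge ht0 ht1.le hqp

section SectorialExponentials

variable {β t : ℝ} {z : ℂ}

lemma norm_neg_pow_mul_cexp_le (hre : β * ‖z‖ ≤ z.re) (ht : 0 ≤ t) (k : ℕ) :
    ‖(-z) ^ k * Complex.exp (-z * t)‖ ≤ ‖z‖ ^ k * Real.exp (-(β * t * ‖z‖)) := by
  rw [norm_mul, norm_pow, norm_neg, Complex.norm_exp]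
  gcongr
  simp only [neg_mul, Complex.neg_re, Complex.re_mul_ofReal]
  nlinarith

lemma norm_neg_pow_mul_cexp_le_rpow {a : ℝ} (hβ : 0 < β) (ha : 0 ≤ a) (ht : 0 < t) (hz : z ≠ 0)
    (hre : β * ‖z‖ ≤ z.re) (k : ℕ) :
    ‖(-z) ^ k * Complex.exp (-z * t)‖ ≤
      ‖z‖ ^ (-a) * (((a + k) / Real.exp 1) ^ (a + k) * β ^ (-(a + k))) * t ^ (-(a + k)) := by
  have hz0 : 0 < ‖z‖ := norm_pos_iff.mpr hz
  set s := a + k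
  set x := β * t * ‖z‖
  have hs : 0 ≤ s := by positivity
  have hscale : ‖z‖ ^ k * Real.exp (-x) =
      ‖z‖ ^ (-a) * (x ^ s * Real.exp (-x) * β ^ (-s)) * t ^ (-s) := by
    have hk : ‖z‖ ^ k = ‖z‖ ^ (-a) * ‖z‖ ^ s := by
      rw [← Real.rpow_add hz0, ← Real.rpow_natCast, neg_add_cancel_left]
    have hx : x ^ s = β ^ s * t ^ s * ‖z‖ ^ s := by
      rw [Real.mul_rpow (by positivity) hz0.le, Real.mul_rpow hβ.le ht.le]
    rw [hk, hx, Real.rpow_neg hβ.le, Real.rpow_neg ht.le]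
    field_simp
  calc ‖(-z) ^ k * Complex.exp (-z * t)‖ ≤ ‖z‖ ^ k * Real.exp (-x) :=
        norm_neg_pow_mul_cexp_le hre ht.le k
    _ = ‖z‖ ^ (-a) * (x ^ s * Real.exp (-x) * β ^ (-s)) * t ^ (-s) := hscale
    _ ≤ ‖z‖ ^ (-a) * ((s / Real.exp 1) ^ s * β ^ (-s)) * t ^ (-s) := by
        gcongr
        exact Real.rpow_mul_exp_neg_le hs (by positivity)

end SectorialExponentials

lemma isBigO_tsum_neg_pow_mul_cexp {lam : ℕ → ℂ} (hne : ∀ n, lam n ≠ 0) {β a : ℝ} (hβ : 0 < β)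
    (ha : 0 ≤ a) (hre : ∀ n, β * ‖lam n‖ ≤ (lam n).re) (hsum : Summable fun n => ‖lam n‖ ^ (-a))
    (k : ℕ) :
    (fun t : ℝ => ∑' n, (-lam n) ^ k * Complex.exp (-lam n * t)) =O[nhdsWithin 0 (Set.Ioi 0)]
      fun t : ℝ => t ^ (-(a + k)) := by
  set C := ((a + k) / Real.exp 1) ^ (a + k) * β ^ (-(a + k))
  refine IsBigO.of_bound ((∑' n, ‖lam n‖ ^ (-a)) * C) ?_
  filter_upwards [self_mem_nhdsWithin] with t (ht : 0 < t)
  have hterm n := norm_neg_pow_mul_cexp_le_rpow (k := k) hβ ha ht (hne n) (hre n)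
  have hdom : Summable fun n => ‖lam n‖ ^ (-a) * C * t ^ (-(a + k)) :=
    (hsum.mul_right C).mul_right _
  rw [Real.norm_of_nonneg (Real.rpow_nonneg ht.le _), ← tsum_mul_right, ← tsum_mul_right]
  exact tsum_of_norm_bounded hdom.hasSum hterm

theorem stmt6_general (lam : ℕ → ℂ) (hne : ∀ n, lam n ≠ 0)
    (β₀ α₀ : ℝ) (hβ₀ : 0 < β₀) (hα₀ : 0 < α₀)
    (hre : ∀ n, β₀ * ‖lam n‖ ≤ (lam n).re)
    (hsum : Summable fun n => ‖lam n‖ ^ (-α₀)) :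
    ∀ k : ℕ, ∀ α : ℝ, α₀ ≤ α → α < 1 →
      (fun t : ℝ => ∑' n, (-lam n) ^ k * Complex.exp (-lam n * t)) =O[nhdsWithin 0 (Set.Ioi 0)]
        fun t : ℝ => t ^ (-α - k) := by
  intro k α hα _
  exact (isBigO_tsum_neg_pow_mul_cexp hne hβ₀ hα₀.le hre hsum k).trans
    (isBigO_rpow_rpow_nhdsGT_zero (by linarith))

theorem stmt6 (lam : ℕ → ℂ) (hne : ∀ n, lam n ≠ 0)
    (β₀ α₀ : ℝ) (hβ₀ : 0 < β₀) (hβ₁ : β₀ < 1) (hα₀ : 0 < α₀) (hα₁ : α₀ < 1)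
    (hre : ∀ n, β₀ * ‖lam n‖ ≤ (lam n).re)
    (hsum : Summable fun n => ‖lam n‖ ^ (-α₀)) :
    ∀ k : ℕ, ∀ α : ℝ, α₀ ≤ α → α < 1 →
      (fun t : ℝ => ∑' n, (-lam n) ^ k * Complex.exp (-lam n * t)) =O[nhdsWithin 0 (Set.Ioi 0)]
        fun t : ℝ => t ^ (-α - k) :=
  stmt6_general lam hne β₀ α₀ hβ₀ hα₀ hre hsum
end

section
/- Let {λ_n} be nonzero complex numbers with Re(λ_n) ≥ β₀|λ_n| (0 < β₀ < 1) and ∑ 1/|λ_n| < ∞, and suppose there exists a finite nonnegative measure ν on [0,1] with ∫_0^1 y dν(y) < ∞ such that f'(0) − f'(z)/f(z) = z ∫_1^∞ y dν(y⁻¹)/(y+z) for all z with Re(z) > 0, where f(z) = ∏(1+z/λ_n). Then ∫_1^∞ y dν(y⁻¹) ≤ |f'(0)| + (1/β₀) ∑_{n≥1} 1/|λ_n| < ∞. -/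
/-!
For `Re z ≥ 0` the logarithmic derivative of `f` is `∑ 1/(z + λₙ)`, and in the sector
`Re λ ≥ β₀|λ|` each term has modulus at most `1/(β₀|λₙ|)`. Taking `z = t > 0` in the
representation therefore bounds `t ∫ y/(y + t) dν(1/y)` by `|f'(0)| + β₀⁻¹ ∑ 1/|λₙ|` for every
`t`; since `t y/(y + t)` increases to `y` as `t → ∞`, monotone convergence gives the same bound
for `∫ y dν(1/y)`.
-/

open MeasureTheory Filter Topology

namespace Complex

variable {ι : Type*} {lam : ι → ℂ}

lemma summable_inv_add_of_summable_inv_norm (hne : ∀ n, lam n ≠ 0)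
    (hsum : Summable fun n => ‖lam n‖⁻¹) (z : ℂ) : Summable fun n => (z + lam n)⁻¹ := by
  have hsmall : ∀ᶠ n in cofinite, ‖z‖ * ‖lam n‖⁻¹ ≤ 2⁻¹ :=
    (hsum.tendsto_cofinite_zero.const_mul ‖z‖).eventually
      (ge_mem_nhds (show ‖z‖ * 0 < 2⁻¹ by norm_num))
  refine Summable.of_norm_bounded_eventually (hsum.mul_left 2) ?_
  filter_upwards [hsmall] with n hn
  have hlam_pos : 0 < ‖lam n‖ := norm_pos_iff.mpr (hne n)
  have hlow : ‖lam n‖ / 2 ≤ ‖z + lam n‖ := by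
    have := norm_sub_norm_le (lam n) (-z)
    rw [norm_neg, sub_neg_eq_add, add_comm] at this
    rw [mul_inv_le_iff₀ hlam_pos] at hn
    linarith
  rw [norm_inv]
  calc ‖z + lam n‖⁻¹ ≤ (‖lam n‖ / 2)⁻¹ := inv_anti₀ (by positivity) hlow
    _ = 2 * ‖lam n‖⁻¹ := by rw [inv_div, div_eq_mul_inv]

lemma logDeriv_tprod_one_add_div (hne : ∀ n, lam n ≠ 0)
    (hsum : Summable fun n => ‖lam n‖⁻¹) {z : ℂ} (hz : ∀ n, z + lam n ≠ 0) :
    logDeriv (fun w => ∏' n, (1 + w / lam n)) z = ∑' n, (z + lam n)⁻¹ := by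
  have hfactor : ∀ n, 1 + z / lam n ≠ 0 := fun n => by
    rw [one_add_div (hne n), add_comm]; exact div_ne_zero (hz n) (hne n)
  have hlogDeriv : ∀ n, logDeriv (fun w => 1 + w / lam n) z = (z + lam n)⁻¹ := fun n => by
    rw [logDeriv_apply, deriv_const_add, deriv_div_const, deriv_id'', one_add_div (hne n),
      div_div_div_cancel_right₀ (hne n), one_div, add_comm]
  have hunif : MultipliableLocallyUniformlyOn (fun n w => 1 + w / lam n)
      (Metric.ball 0 (‖z‖ + 1)) := by
    refine (hsum.mul_left (‖z‖ + 1)).multipliableLocallyUniformlyOn_one_add Metric.isOpen_ball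
      (.of_forall fun n w hw => ?_) fun n => by fun_prop
    rw [norm_div, div_eq_mul_inv]
    exact mul_le_mul_of_nonneg_right (mem_ball_zero_iff.mp hw).le (by positivity)
  have hprod : ∏' n, (1 + z / lam n) ≠ 0 :=
    tprod_one_add_ne_zero_of_summable hfactor
      (by simpa [norm_div, div_eq_mul_inv] using hsum.mul_left ‖z‖)
  rw [logDeriv_tprod_eq_tsum Metric.isOpen_ball (by simp) hfactor (fun n => by fun_prop)
    (by simpa [hlogDeriv] using summable_inv_add_of_summable_inv_norm hne hsum z) hunif hprod]
  simp only [hlogDeriv]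

lemma norm_inv_add_le_of_mul_norm_le_re {β : ℝ} (hβ : 0 < β) {a z : ℂ} (ha : a ≠ 0)
    (hre : β * ‖a‖ ≤ a.re) (hz : 0 ≤ z.re) : ‖(z + a)⁻¹‖ ≤ β⁻¹ * ‖a‖⁻¹ := by
  have hlow : β * ‖a‖ ≤ ‖z + a‖ := by
    have := re_le_norm (z + a)
    rw [add_re] at this
    linarith
  rw [norm_inv, ← mul_inv]
  exact inv_anti₀ (mul_pos hβ (norm_pos_iff.mpr ha)) hlow

lemma norm_logDeriv_tprod_one_add_div_le (hne : ∀ n, lam n ≠ 0) {β : ℝ} (hβ : 0 < β)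
    (hre : ∀ n, β * ‖lam n‖ ≤ (lam n).re) (hsum : Summable fun n => ‖lam n‖⁻¹) {z : ℂ}
    (hz : 0 ≤ z.re) :
    ‖logDeriv (fun w => ∏' n, (1 + w / lam n)) z‖ ≤ β⁻¹ * ∑' n, ‖lam n‖⁻¹ := by
  have hz_add : ∀ n, z + lam n ≠ 0 := fun n h => by
    have := congrArg re h
    rw [add_re, zero_re] at this
    nlinarith [hre n, norm_pos_iff.mpr (hne n)]
  rw [logDeriv_tprod_one_add_div hne hsum hz_add, ← tsum_mul_left]
  exact tsum_of_norm_bounded (hsum.mul_left β⁻¹).hasSum fun n =>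
    norm_inv_add_le_of_mul_norm_le_re hβ (hne n) (hre n) hz

end Complex

lemma monotoneOn_mul_div_add {x : ℝ} (hx : 0 ≤ x) :
    MonotoneOn (fun t => t * x / (x + t)) (Set.Ici 0) := by
  intro s hs t _ hst
  rcases hx.eq_or_lt with rfl | hx
  · simp
  simp only [Set.mem_Ici] at hs
  rw [div_le_div_iff₀ (by linarith) (by linarith)]
  nlinarith [mul_le_mul_of_nonneg_right hst (mul_self_nonneg x)]

lemma mul_div_add_nonneg {x t : ℝ} (hx : 0 ≤ x) (ht : 0 ≤ t) : 0 ≤ t * x / (x + t) :=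
  div_nonneg (mul_nonneg ht hx) (add_nonneg hx ht)

lemma mul_div_add_le_self {x t : ℝ} (hx : 0 ≤ x) (ht : 0 ≤ t) : t * x / (x + t) ≤ t := by
  rcases (add_nonneg hx ht).eq_or_lt with h | h
  · rw [← h, div_zero]; exact ht
  rw [div_le_iff₀ h]
  nlinarith

lemma tendsto_mul_div_add_atTop (x : ℝ) :
    Tendsto (fun t => t * x / (x + t)) atTop (𝓝 x) := by
  have hden : Tendsto (fun t => x + t) atTop atTop := tendsto_atTop_add_const_left _ _ tendsto_id
  have hlim : Tendsto (fun t => x - x * x / (x + t)) atTop (𝓝 (x - 0)) :=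
    tendsto_const_nhds.sub (tendsto_const_nhds.div_atTop hden)
  rw [sub_zero] at hlim
  refine hlim.congr' ?_
  filter_upwards [hden.eventually_gt_atTop 0] with t ht
  field_simp
  ring

variable {α : Type*} [MeasurableSpace α] {μ : Measure α} {g : α → ℝ}

lemma lintegral_ofReal_le_of_forall_integral_mul_div_add_le [IsFiniteMeasure μ]
    (hg : AEMeasurable g μ) (hg0 : 0 ≤ᵐ[μ] g) {C : ℝ}
    (hC : ∀ t > 0, ∫ x, t * g x / (g x + t) ∂μ ≤ C) :
    ∫⁻ x, ENNReal.ofReal (g x) ∂μ ≤ ENNReal.ofReal C := by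
  set F : ℕ → α → ℝ := fun k x => k * g x / (g x + k)
  have hF_meas : ∀ k, AEMeasurable (F k) μ := fun k => by fun_prop
  have hF_int : ∀ k, Integrable (F k) μ := fun k => by
    refine (integrable_const (k : ℝ)).mono' (hF_meas k).aestronglyMeasurable ?_
    filter_upwards [hg0] with x hx
    rw [Real.norm_eq_abs, abs_of_nonneg (mul_div_add_nonneg hx k.cast_nonneg)]
    exact mul_div_add_le_self hx k.cast_nonneg
  have hlim : Tendsto (fun k => ∫⁻ x, ENNReal.ofReal (F k x) ∂μ) atTop
      (𝓝 (∫⁻ x, ENNReal.ofReal (g x) ∂μ)) := by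
    refine lintegral_tendsto_of_tendsto_of_monotone (fun k => (hF_meas k).ennreal_ofReal) ?_ ?_
    · filter_upwards [hg0] with x hx j k hjk
      exact ENNReal.ofReal_le_ofReal
        (monotoneOn_mul_div_add hx (Set.mem_Ici.mpr j.cast_nonneg) (Set.mem_Ici.mpr k.cast_nonneg)
          (Nat.cast_le.mpr hjk))
    · exact .of_forall fun x => (ENNReal.continuous_ofReal.tendsto _).comp
        ((tendsto_mul_div_add_atTop (g x)).comp tendsto_natCast_atTop_atTop)
  refine le_of_tendsto hlim ((eventually_gt_atTop 0).mono fun k hk => ?_)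
  rw [← ofReal_integral_eq_lintegral_ofReal (hF_int k)
    (by filter_upwards [hg0] with x hx using mul_div_add_nonneg hx k.cast_nonneg)]
  exact ENNReal.ofReal_le_ofReal (hC k (Nat.cast_pos.mpr hk))

lemma integrable_and_integral_le_of_forall_integral_mul_div_add_le [IsFiniteMeasure μ]
    (hg : AEMeasurable g μ) (hg0 : 0 ≤ᵐ[μ] g) {C : ℝ}
    (hC : ∀ t > 0, ∫ x, t * g x / (g x + t) ∂μ ≤ C) :
    Integrable g μ ∧ ∫ x, g x ∂μ ≤ C := by
  have hlint := lintegral_ofReal_le_of_forall_integral_mul_div_add_le hg hg0 hC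
  have hC0 : 0 ≤ C := le_trans (integral_nonneg_of_ae
    (by filter_upwards [hg0] with x hx using mul_div_add_nonneg hx zero_le_one)) (hC 1 one_pos)
  refine ⟨⟨hg.aestronglyMeasurable, (hasFiniteIntegral_iff_ofReal hg0).mpr
    (hlint.trans_lt ENNReal.ofReal_lt_top)⟩, ?_⟩
  rw [integral_eq_lintegral_of_nonneg_ae hg0 hg.aestronglyMeasurable]
  exact ENNReal.toReal_le_of_le_ofReal hC0 hlint

lemma ofReal_integral_mul_div_add (g : α → ℝ) (t : ℝ) :
    ((∫ x, t * g x / (g x + t) ∂μ : ℝ) : ℂ) = t * ∫ x, (g x : ℂ) / (g x + t) ∂μ := by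
  rw [← integral_complex_ofReal, ← integral_const_mul]
  congr 1 with x
  push_cast
  ring

theorem stmt15_general (lam : ℕ → ℂ) (hne : ∀ n, lam n ≠ 0)
    (β₀ : ℝ) (hβ₀ : 0 < β₀)
    (hre : ∀ n, β₀ * ‖lam n‖ ≤ (lam n).re)
    (hsum : Summable fun n => 1 / ‖lam n‖)
    (f : ℂ → ℂ) (hf : ∀ w, f w = ∏' n, (1 + w / lam n))
    (ν : Measure ℝ) [IsFiniteMeasure ν]
    (hrep : ∀ z : ℂ, 0 < z.re →
      deriv f 0 - deriv f z / f z =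
        z * ∫ u in Set.Ioc (0:ℝ) 1, ((u⁻¹ : ℝ) : ℂ) / (((u⁻¹ : ℝ) : ℂ) + z) ∂ν) :
    IntegrableOn (fun u : ℝ => u⁻¹) (Set.Ioc 0 1) ν ∧
      (∫ u in Set.Ioc (0:ℝ) 1, u⁻¹ ∂ν) ≤
        ‖deriv f 0‖ + (1 / β₀) * ∑' n, 1 / ‖lam n‖ := by
  simp only [one_div] at hsum ⊢
  refine integrable_and_integral_le_of_forall_integral_mul_div_add_le
    measurable_inv.aemeasurable (ae_restrict_of_forall_mem measurableSet_Ioc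
      fun u hu => inv_nonneg.mpr hu.1.le) fun t ht => ?_
  have hlog : ‖logDeriv f t‖ ≤ β₀⁻¹ * ∑' n, ‖lam n‖⁻¹ := by
    rw [funext hf]
    exact Complex.norm_logDeriv_tprod_one_add_div_le hne hβ₀ hre hsum (by simpa using ht.le)
  calc ∫ u in Set.Ioc 0 1, t * u⁻¹ / (u⁻¹ + t) ∂ν
      = (deriv f 0 - logDeriv f t).re := by
        rw [logDeriv_apply, hrep t (by simpa using ht), ← ofReal_integral_mul_div_add,
          Complex.ofReal_re]
    _ ≤ ‖deriv f 0‖ + ‖logDeriv f t‖ := (Complex.re_le_norm _).trans (norm_sub_le _ _)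
    _ ≤ ‖deriv f 0‖ + β₀⁻¹ * ∑' n, ‖lam n‖⁻¹ := by gcongr

theorem stmt15 (lam : ℕ → ℂ) (hne : ∀ n, lam n ≠ 0)
    (β₀ : ℝ) (hβ₀ : 0 < β₀) (hβ₁ : β₀ < 1)
    (hre : ∀ n, β₀ * ‖lam n‖ ≤ (lam n).re)
    (hsum : Summable fun n => 1 / ‖lam n‖)
    (f : ℂ → ℂ) (hf : ∀ w, f w = ∏' n, (1 + w / lam n))
    (ν : Measure ℝ) [IsFiniteMeasure ν] (hsupp : ν (Set.Icc (0:ℝ) 1)ᶜ = 0)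
    (hrep : ∀ z : ℂ, 0 < z.re →
      deriv f 0 - deriv f z / f z =
        z * ∫ u in Set.Ioc (0:ℝ) 1, ((u⁻¹ : ℝ) : ℂ) / (((u⁻¹ : ℝ) : ℂ) + z) ∂ν) :
    IntegrableOn (fun u : ℝ => u⁻¹) (Set.Ioc 0 1) ν ∧
      (∫ u in Set.Ioc (0:ℝ) 1, u⁻¹ ∂ν) ≤
        ‖deriv f 0‖ + (1 / β₀) * ∑' n, 1 / ‖lam n‖ :=
  stmt15_general lam hne β₀ hβ₀ hre hsum f hf ν hrep
end
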